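/- For all A, B, C ∈ GL_d(ℚ_p) and every integer 0 ≤ i ≤ d: m_{A:0,B:d} + m_{A:i,C:d−i} − m_{A:i,B:d−i} − m_{B:i,C:d−i} ≥ 0. -/

import Mathlib

namespace BTAux


open Finset in
lemma det_mul_expand {k d : ℕ} {R : Type*} [CommRing R]
    (P : Matrix (Fin k) (Fin d) R) (Q : Matrix (Fin d) (Fin k) R) :
    (P * Q).det = ∑ f : Fin k → Fin d, (P.submatrix id f).det * ∏ i, Q (f i) i := by
  have : (P * Q).det = ∑ f : Fin k → Fin d, ∑ σ : Equiv.Perm (Fin k),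
      (Equiv.Perm.sign σ : ℤ) * ∏ i, P (σ i) (f i) * Q (f i) i := by
    simp only [Matrix.det_apply', Matrix.mul_apply, prod_univ_sum, mul_sum,
      Fintype.piFinset_univ]
    rw [Finset.sum_comm]
  rw [this]
  refine Finset.sum_congr rfl fun f _ => ?_
  rw [Matrix.det_apply', Finset.sum_mul]
  refine Finset.sum_congr rfl fun σ _ => ?_
  rw [Finset.prod_mul_distrib, mul_assoc]
  rfl

open Finset in
lemma cauchy_binet {k d : ℕ} {R : Type*} [CommRing R]
    (P : Matrix (Fin k) (Fin d) R) (Q : Matrix (Fin d) (Fin k) R) :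
    (P * Q).det = ∑ e ∈ Finset.univ.filter (fun e : Fin k → Fin d => StrictMono e),
      (P.submatrix id e).det * (Q.submatrix e id).det := by
  classical
  rw [det_mul_expand]
  rw [← Finset.sum_filter_add_sum_filter_not Finset.univ (fun f : Fin k → Fin d => Function.Injective f)]
  have h2 : ∑ f ∈ Finset.univ.filter (fun f : Fin k → Fin d => ¬ Function.Injective f),
      (P.submatrix id f).det * ∏ i, Q (f i) i = 0 := by
    refine Finset.sum_eq_zero fun f hf => ?_
    have hf' := (Finset.mem_filter.1 hf).2
    simp only [Function.Injective] at hf'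
    push_neg at hf'
    obtain ⟨a, b, hab, hne⟩ := hf'
    rw [Matrix.det_zero_of_column_eq hne fun i => by simp [hab], zero_mul]
  rw [h2, add_zero]
  have key : ∑ f ∈ Finset.univ.filter (fun f : Fin k → Fin d => Function.Injective f),
      (P.submatrix id f).det * ∏ i, Q (f i) i
      = ∑ q ∈ (Finset.univ.filter (fun e : Fin k → Fin d => StrictMono e)) ×ˢ
          (Finset.univ : Finset (Equiv.Perm (Fin k))),
        ((Equiv.Perm.sign q.2 : ℤ) * (P.submatrix id q.1).det) * ∏ i, Q (q.1 (q.2 i)) i := by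
    refine Finset.sum_nbij' (i := fun f => (f ∘ (Tuple.sort f), (Tuple.sort f)⁻¹))
      (j := fun q => q.1 ∘ q.2) ?_ ?_ ?_ ?_ ?_
    · intro f hf
      simp only [Finset.mem_filter, Finset.mem_univ, true_and] at hf ⊢
      rw [Finset.mem_product]
      refine ⟨Finset.mem_filter.2 ⟨Finset.mem_univ _, ?_⟩, Finset.mem_univ _⟩
      exact (Tuple.monotone_sort f).strictMono_of_injective (hf.comp (Equiv.injective _))
    · intro q hq
      rw [Finset.mem_product] at hq
      have h1 := (Finset.mem_filter.1 hq.1).2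
      simp only [Finset.mem_filter, Finset.mem_univ, true_and]
      exact h1.injective.comp (Equiv.injective _)
    · intro f hf
      funext x
      simp [Equiv.Perm.inv_def]
    · intro q hq
      rw [Finset.mem_product] at hq
      have h1 := (Finset.mem_filter.1 hq.1).2
      have hmono : (q.1 ∘ q.2) ∘ (Tuple.sort (q.1 ∘ q.2)) = q.1 := by
        rw [show (q.1 ∘ ⇑q.2) ∘ ⇑(Tuple.sort (q.1 ∘ ⇑q.2)) = q.1 ∘ ⇑(Tuple.sort q.1) from
          Tuple.comp_perm_comp_sort_eq_comp_sort,
          Tuple.sort_eq_refl_iff_monotone.2 h1.monotone]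
        rfl
      have hτ : ⇑q.2 ∘ ⇑(Tuple.sort (q.1 ∘ ⇑q.2)) = id := by
        have : q.1 ∘ (⇑q.2 ∘ ⇑(Tuple.sort (q.1 ∘ ⇑q.2))) = q.1 ∘ id := by
          rw [← Function.comp_assoc]; exact hmono
        exact h1.injective.comp_left this
      have hsort : Tuple.sort (q.1 ∘ ⇑q.2) = q.2⁻¹ := by
        apply Equiv.ext
        intro x
        have h2 := congrFun hτ x
        simp only [Function.comp_apply, id_eq] at h2
        exact (Equiv.eq_symm_apply q.2).2 h2
      rw [Prod.ext_iff]
      constructor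
      · exact hmono
      · simp [hsort]
    · intro f hf
      dsimp only
      have e1 : P.submatrix id (f ∘ ⇑(Tuple.sort f)) = (P.submatrix id f).submatrix id ⇑(Tuple.sort f) := by
        rw [Matrix.submatrix_submatrix]; rfl
      have e2 : ∀ i, (f ∘ ⇑(Tuple.sort f)) ((Tuple.sort f)⁻¹ i) = f i := by
        intro i; simp [Equiv.Perm.inv_def]
      have e3 : ((Equiv.Perm.sign (Tuple.sort f)⁻¹ : ℤ) : R) *
          ((Equiv.Perm.sign (Tuple.sort f) : ℤ) : R) = 1 := by
        rcases Int.units_eq_one_or (Equiv.Perm.sign (Tuple.sort f)) with h | h <;>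
          simp [Equiv.Perm.sign_inv, h]
      rw [e1, Matrix.det_permute']
      simp only [e2]
      rw [← mul_assoc, e3, one_mul]
  rw [key, Finset.sum_product]
  refine Finset.sum_congr rfl fun e he => ?_
  rw [Matrix.det_apply' (Q.submatrix e id), Finset.mul_sum]
  refine Finset.sum_congr rfl fun τ _ => ?_
  simp only [Matrix.submatrix_apply, id_eq]
  ring



lemma norm_sign_mul {p : ℕ} [Fact p.Prime] {α : Type*} [DecidableEq α] [Fintype α]
    (σ : Equiv.Perm α) (x : ℚ_[p]) :
    ‖((Equiv.Perm.sign σ : ℤ) : ℚ_[p]) * x‖ = ‖x‖ := by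
  rcases Int.units_eq_one_or (Equiv.Perm.sign σ) with h | h <;> simp [h]

lemma norm_det_eq_submatrix {p : ℕ} [Fact p.Prime] {d k : ℕ}
    (N : Matrix (Fin d) (Fin d) ℚ_[p]) (S : Finset (Fin d)) (φ : Fin d → Fin d)
    (hφ : Set.InjOn φ ↑S)
    (hrow : ∀ j ∈ S, N j = fun c => if φ j = c then (1:ℚ_[p]) else 0)
    (f g : Fin k → Fin d) (hf : Function.Injective f) (hg : Function.Injective g)
    (hfS : ∀ a, f a ∉ S) (hgT : ∀ a, g a ∉ S.image φ)
    (hcard : S.card + k = d) :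
    ‖N.det‖ = ‖(N.submatrix f g).det‖ := by
  classical
  set i := S.card with hi
  let eS : Fin i ≃o {x // x ∈ S} := S.orderIsoOfFin rfl
  have hmemS : ∀ a : Fin i, ((eS a : Fin d)) ∈ S := fun a => (eS a).2
  have hmemT : ∀ a : Fin i, φ (eS a) ∈ S.image φ := fun a =>
    Finset.mem_image_of_mem φ (hmemS a)
  have hιinj : Function.Injective (Sum.elim (fun a : Fin i => (eS a : Fin d)) f) := by
    intro x y hxy
    rcases x with a | a <;> rcases y with b | b
    · exact congrArg Sum.inl (eS.injective (Subtype.ext hxy))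
    · simp only [Sum.elim_inl, Sum.elim_inr] at hxy
      exact absurd (hxy ▸ hmemS a) (hfS b)
    · simp only [Sum.elim_inl, Sum.elim_inr] at hxy
      exact absurd (hxy.symm ▸ hmemS b) (hfS a)
    · exact congrArg Sum.inr (hf hxy)
  have hκinj : Function.Injective (Sum.elim (fun a : Fin i => φ (eS a)) g) := by
    intro x y hxy
    rcases x with a | a <;> rcases y with b | b
    · simp only [Sum.elim_inl] at hxy
      exact congrArg Sum.inl (eS.injective (Subtype.ext (hφ (hmemS a) (hmemS b) hxy)))
    · simp only [Sum.elim_inl, Sum.elim_inr] at hxy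
      exact absurd (hxy ▸ hmemT a) (hgT b)
    · simp only [Sum.elim_inl, Sum.elim_inr] at hxy
      exact absurd (hxy.symm ▸ hmemT b) (hgT a)
    · exact congrArg Sum.inr (hg hxy)
  have hcard' : Fintype.card (Fin i ⊕ Fin k) = Fintype.card (Fin d) := by
    simp [hcard]
  let ι : (Fin i ⊕ Fin k) ≃ Fin d :=
    Equiv.ofBijective _ ((Fintype.bijective_iff_injective_and_card _).2 ⟨hιinj, hcard'⟩)
  let κ : (Fin i ⊕ Fin k) ≃ Fin d :=
    Equiv.ofBijective _ ((Fintype.bijective_iff_injective_and_card _).2 ⟨hκinj, hcard'⟩)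
  have hblock : N.submatrix ⇑ι ⇑κ =
      Matrix.fromBlocks 1 0 (N.submatrix f (fun b => φ (eS b))) (N.submatrix f g) := by
    ext a b
    rcases a with a | a <;> rcases b with b | b
    · show N (eS a) (φ (eS b)) = _
      rw [hrow _ (hmemS a)]
      by_cases hab : a = b
      · subst hab; simp [Matrix.one_apply]
      · have : φ (eS a) ≠ φ (eS b) := fun hc =>
          hab (eS.injective (Subtype.ext (hφ (hmemS a) (hmemS b) hc)))
        simp [Matrix.one_apply, this, hab]
    · show N (eS a) (g b) = _
      rw [hrow _ (hmemS a)]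
      have : φ (eS a) ≠ g b := fun hc => (hgT b) (hc ▸ hmemT a)
      simp [this]
    · rfl
    · rfl
  have hdet1 : (N.submatrix ⇑ι ⇑κ).det = (N.submatrix f g).det := by
    rw [hblock, Matrix.det_fromBlocks_zero₁₂, Matrix.det_one, one_mul]
  have hcomp : ⇑ι ∘ ⇑(κ.trans ι.symm) = ⇑κ := by
    funext x; simp
  have hdet2 : (N.submatrix ⇑ι ⇑κ).det
      = ((Equiv.Perm.sign (κ.trans ι.symm) : ℤ) : ℚ_[p]) * N.det := by
    have : N.submatrix ⇑ι ⇑κ = (N.submatrix ⇑ι ⇑ι).submatrix id ⇑(κ.trans ι.symm) := by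
      rw [Matrix.submatrix_submatrix, Function.comp_id, hcomp]
    rw [this, Matrix.det_permute', Matrix.det_submatrix_equiv_self]
  have := congrArg norm hdet2
  rw [norm_sign_mul, hdet1] at this
  exact this.symm



lemma exists_cols {F : Type*} [Field F] {d : ℕ} :
    ∀ {k : ℕ} (v : Fin k → (Fin d → F)), LinearIndependent F v →
      ∃ g : Fin k → Fin d, Function.Injective g ∧
        (Matrix.of fun a b => v a (g b)).det ≠ 0 := by
  intro k
  induction k with
  | zero =>
    intro v _
    exact ⟨fun a => a.elim0, fun a => a.elim0, by simp [Matrix.det_isEmpty]⟩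
  | succ k IH =>
    intro v hv
    obtain ⟨g', hg', hdet'⟩ := IH (v ∘ Fin.succ) (hv.comp Fin.succ (Fin.succ_injective k))
    -- the candidate determinants as a function of the new column j
    set W : Fin d → Matrix (Fin (k+1)) (Fin (k+1)) F :=
      fun j => Matrix.of fun a b => v a (Fin.cases j g' b) with hW
    have hW0 : ∀ (j : Fin d) (a : Fin (k+1)), (W j) a 0 = v a j := by intro j a; simp [hW]
    have hWsub : ∀ (j : Fin d) (a : Fin (k+1)), ((W j).submatrix a.succAbove Fin.succ)
        = Matrix.of fun a' b' => v (a.succAbove a') (g' b') := by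
      intro j a; ext a' b'; simp [hW]
    have hexp : ∀ j, (W j).det = ∑ a : Fin (k+1),
        ((-1) ^ (a : ℕ) * (Matrix.of fun a' b' => v (a.succAbove a') (g' b')).det) * v a j := by
      intro j
      rw [Matrix.det_succ_column_zero]
      refine Finset.sum_congr rfl fun a _ => ?_
      rw [hW0, hWsub]; ring
    have hex : ∃ j, (W j).det ≠ 0 := by
      by_contra hc
      push_neg at hc
      set c : Fin (k+1) → F :=
        fun a => (-1) ^ (a : ℕ) * (Matrix.of fun a' b' => v (a.succAbove a') (g' b')).det with hcdef
      have hsum : ∑ a, c a • v a = 0 := by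
        funext j
        rw [Finset.sum_apply]
        simp only [Pi.smul_apply, smul_eq_mul]
        rw [Pi.zero_apply, ← hc j, hexp j]
      have hc0 : c 0 = 0 := Fintype.linearIndependent_iff.1 hv c hsum 0
      rw [hcdef] at hc0
      simp only [Fin.val_zero, pow_zero, one_mul] at hc0
      have heq : (Matrix.of fun a' b' => v ((0:Fin (k+1)).succAbove a') (g' b'))
           = Matrix.of fun a b => (v ∘ Fin.succ) a (g' b) := by
        ext a' b'; simp [Fin.zero_succAbove]
      rw [heq] at hc0
      exact hdet' hc0
    obtain ⟨j, hj⟩ := hex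
    have hjrange : ∀ b, j ≠ g' b := by
      intro b hb
      apply hj
      apply Matrix.det_zero_of_column_eq (i := 0) (j := Fin.succ b) (Fin.succ_ne_zero b).symm
      intro a
      simp [hW, hb]
    refine ⟨Fin.cases j g', ?_, hj⟩
    · intro x y hxy
      rcases Fin.eq_zero_or_eq_succ x with rfl | ⟨x', rfl⟩ <;>
        rcases Fin.eq_zero_or_eq_succ y with rfl | ⟨y', rfl⟩
      · rfl
      · simp only [Fin.cases_zero, Fin.cases_succ] at hxy
        exact absurd hxy (hjrange y')
      · simp only [Fin.cases_zero, Fin.cases_succ] at hxy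
        exact absurd hxy.symm (hjrange x')
      · simp only [Fin.cases_succ] at hxy
        exact congrArg Fin.succ (hg' hxy)

lemma exists_nonzero_minor {F : Type*} [Field F] {d k : ℕ} (hk : k ≤ d)
    (M : Matrix (Fin d) (Fin d) F) (hM : M.det ≠ 0) :
    ∃ f g : Fin k → Fin d, Function.Injective f ∧ Function.Injective g ∧
      (M.submatrix f g).det ≠ 0 := by
  have hrows : LinearIndependent F (fun a => M a) :=
    Matrix.linearIndependent_rows_iff_isUnit.2 ((Matrix.isUnit_iff_isUnit_det M).2 hM.isUnit)
  have hf : Function.Injective (Fin.castLE hk) := Fin.castLE_injective hk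
  obtain ⟨g, hg, hdet⟩ := exists_cols (fun a => M (Fin.castLE hk a)) (hrows.comp _ hf)
  exact ⟨Fin.castLE hk, g, hf, hg, hdet⟩

lemma norm_det_mul_submatrix_le {p : ℕ} [Fact p.Prime] {k d : ℕ}
    (M N : Matrix (Fin d) (Fin d) ℚ_[p])
    (f g : Fin k → Fin d) {u v : ℝ} (hu : 0 ≤ u) (hv : 0 ≤ v)
    (hM : ∀ e : Fin k → Fin d, Function.Injective e → ‖(M.submatrix f e).det‖ ≤ u)
    (hN : ∀ e : Fin k → Fin d, Function.Injective e → ‖(N.submatrix e g).det‖ ≤ v) :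
    ‖(((M * N)).submatrix f g).det‖ ≤ u * v := by
  classical
  have hsub : (M * N).submatrix f g = (M.submatrix f id) * (N.submatrix id g) := by
    ext a b; simp [Matrix.mul_apply]
  rw [hsub, cauchy_binet]
  refine IsUltrametricDist.norm_sum_le_of_forall_le_of_nonneg (mul_nonneg hu hv) ?_
  intro e he
  rw [Finset.mem_filter] at he
  have hinj : Function.Injective e := he.2.injective
  rw [Matrix.submatrix_submatrix, Matrix.submatrix_submatrix]
  simp only [Function.comp_id, Function.id_comp]
  rw [norm_mul]
  exact mul_le_mul (hM e hinj) (hN e hinj) (norm_nonneg _) hu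

end BTAux


open Pointwise

namespace BT

variable (p : ℕ) [Fact p.Prime] (d : ℕ)

/-- A `ℤ_[p]`-lattice in `ℚ_[p]^d`: a finitely generated `ℤ_[p]`-submodule that
spans `ℚ_[p]^d` over `ℚ_[p]`. -/
def IsLattice (L : Submodule ℤ_[p] (Fin d → ℚ_[p])) : Prop :=
  L.FG ∧ Submodule.span ℚ_[p] (L : Set (Fin d → ℚ_[p])) = ⊤

/-- Two submodules are homothetic if one is a nonzero scalar multiple of the other. -/
def Homothetic (L L' : Submodule ℤ_[p] (Fin d → ℚ_[p])) : Prop :=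
  ∃ c : ℚ_[p], c ≠ 0 ∧ (L' : Set (Fin d → ℚ_[p])) = c • (L : Set (Fin d → ℚ_[p]))

theorem homothetic_equivalence : Equivalence (Homothetic p d) where
  refl := fun L => ⟨1, one_ne_zero, (one_smul ℚ_[p] (L : Set (Fin d → ℚ_[p]))).symm⟩
  symm := by
    rintro L L' ⟨c, hc, h⟩
    exact ⟨c⁻¹, inv_ne_zero hc, by rw [h, inv_smul_smul₀ hc]⟩
  trans := by
    rintro L L' L'' ⟨c, hc, h⟩ ⟨c', hc', h'⟩
    exact ⟨c' * c, mul_ne_zero hc' hc, by rw [h', h, smul_smul]⟩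

def BTSetoid : Setoid (Submodule ℤ_[p] (Fin d → ℚ_[p])) :=
  ⟨Homothetic p d, homothetic_equivalence p d⟩

/-- Vertices of the Bruhat–Tits building: homothety classes of submodules
(the building proper consists of the classes of lattices). -/
def Vertex := Quotient (BTSetoid p d)

/-- `A_v`: the homothety class of the `ℤ_[p]`-span of the rows of `A`. -/
noncomputable def vertexOf (A : Matrix (Fin d) (Fin d) ℚ_[p]) : Vertex p d :=
  Quotient.mk (BTSetoid p d) (Submodule.span ℤ_[p] (Set.range fun i => A i))

/-- One half of the adjacency relation: there are lattice representatives
`L ⊋ L' ⊋ pL`. -/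
def AdjHalf (x y : Vertex p d) : Prop :=
  ∃ L L' : Submodule ℤ_[p] (Fin d → ℚ_[p]),
    IsLattice p d L ∧ IsLattice p d L' ∧
    x = Quotient.mk (BTSetoid p d) L ∧ y = Quotient.mk (BTSetoid p d) L' ∧
    (L' : Set (Fin d → ℚ_[p])) ⊂ (L : Set (Fin d → ℚ_[p])) ∧
    (p : ℚ_[p]) • (L : Set (Fin d → ℚ_[p])) ⊂ (L' : Set (Fin d → ℚ_[p]))

/-- The 1-skeleton of the Bruhat–Tits building of `SL_d(ℚ_p)` as a simple graph. -/
def Graph : SimpleGraph (Vertex p d) where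
  Adj x y := x ≠ y ∧ (AdjHalf p d x y ∨ AdjHalf p d y x)
  symm := ⟨fun x y h => ⟨h.1.symm, h.2.symm⟩⟩
  loopless := ⟨fun x h => h.1 rfl⟩

/-- An `(A:i, B:d−i)`-candidate: a matrix whose rows are `i` pairwise distinct rows
of `A` and `d − i` pairwise distinct rows of `B`. -/
def IsCandidate (i : ℕ) (A B X : Matrix (Fin d) (Fin d) ℚ_[p]) : Prop :=
  ∃ (S : Finset (Fin d)) (ρ : Fin d → Fin d),
    S.card = i ∧ Set.InjOn ρ ↑S ∧ Set.InjOn ρ ↑Sᶜ ∧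
    ∀ j, X j = if j ∈ S then A (ρ j) else B (ρ j)

/-- `m_{A:i,B:d−i}`: the minimal valuation of the determinant of an
`(A:i, B:d−i)`-candidate with nonzero determinant. -/
noncomputable def mVal (i : ℕ) (A B : Matrix (Fin d) (Fin d) ℚ_[p]) : ℤ :=
  sInf {v : ℤ | ∃ X : Matrix (Fin d) (Fin d) ℚ_[p],
    IsCandidate p d i A B X ∧ X.det ≠ 0 ∧ v = X.det.valuation}

/-- Membership in `GL_d(ℤ_p)` (as a matrix over `ℚ_p`): integral entries and
determinant a unit of `ℤ_p`. -/
def InGLZp (X : Matrix (Fin d) (Fin d) ℚ_[p]) : Prop :=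
  (∀ i j, ‖X i j‖ ≤ 1) ∧ ‖X.det‖ = 1


section Glue
-- ######## new code starts here
section Aux

lemma one_lt_p : (1:ℝ) < p := by exact_mod_cast (Fact.out : p.Prime).one_lt

lemma p_pos : (0:ℝ) < p := lt_trans one_pos (one_lt_p p)

variable {p}

lemma val_le_of_norm_le {x : ℚ_[p]} (hx : x ≠ 0) {m : ℤ} (h : ‖x‖ ≤ (p:ℝ) ^ (-m)) :
    m ≤ x.valuation := by
  rw [Padic.norm_eq_zpow_neg_valuation hx] at h
  have := (zpow_right_strictMono₀ (one_lt_p p)).le_iff_le.1 h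
  omega

lemma norm_le_pow_of_le_val {x : ℚ_[p]} (hx : x ≠ 0) {m : ℤ} (h : m ≤ x.valuation) :
    ‖x‖ ≤ (p:ℝ) ^ (-m) := by
  rw [Padic.norm_eq_zpow_neg_valuation hx]
  exact (zpow_right_strictMono₀ (one_lt_p p)).monotone (by omega)

lemma val_eq_of_norm_eq {x y : ℚ_[p]} (hx : x ≠ 0) (hy : y ≠ 0) (h : ‖x‖ = ‖y‖) :
    x.valuation = y.valuation := by
  rw [Padic.norm_eq_zpow_neg_valuation hx, Padic.norm_eq_zpow_neg_valuation hy] at h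
  have := (zpow_right_strictMono₀ (one_lt_p p)).injective h
  omega

end Aux

/-- Valuations of nonzero `k × k` minors of `M`. -/
def minorVals (k : ℕ) (M : Matrix (Fin d) (Fin d) ℚ_[p]) : Set ℤ :=
  {w | ∃ f g : Fin k → Fin d, Function.Injective f ∧ Function.Injective g ∧
    (M.submatrix f g).det ≠ 0 ∧ w = (M.submatrix f g).det.valuation}

def candVals (i : ℕ) (A B : Matrix (Fin d) (Fin d) ℚ_[p]) : Set ℤ :=
  {v : ℤ | ∃ X : Matrix (Fin d) (Fin d) ℚ_[p],
    IsCandidate p d i A B X ∧ X.det ≠ 0 ∧ v = X.det.valuation}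

lemma mVal_eq (i : ℕ) (A B : Matrix (Fin d) (Fin d) ℚ_[p]) :
    mVal p d i A B = sInf (candVals p d i A B) := rfl

lemma minorVals_bddBelow (k : ℕ) (M : Matrix (Fin d) (Fin d) ℚ_[p]) :
    BddBelow (minorVals p d k M) := by
  refine Set.Finite.bddBelow (Set.Finite.subset
    (Set.finite_range fun q : (Fin k → Fin d) × (Fin k → Fin d) =>
      (M.submatrix q.1 q.2).det.valuation) ?_)
  rintro w ⟨f, g, _, _, _, rfl⟩
  exact ⟨(f, g), rfl⟩

lemma candVals_bddBelow (i : ℕ) (A B : Matrix (Fin d) (Fin d) ℚ_[p]) :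
    BddBelow (candVals p d i A B) := by
  refine Set.Finite.bddBelow (Set.Finite.subset
    (Set.finite_range fun q : Finset (Fin d) × (Fin d → Fin d) =>
      (Matrix.det (Matrix.of fun j => if j ∈ q.1 then A (q.2 j) else B (q.2 j))).valuation) ?_)
  rintro v ⟨X, ⟨S, ρ, _, _, _, hX⟩, _, rfl⟩
  refine ⟨(S, ρ), ?_⟩
  have : X = Matrix.of fun j => if j ∈ S then A (ρ j) else B (ρ j) := by
    ext j c
    rw [show X j = _ from hX j]
    rfl
  rw [this]

variable {p d}

lemma rows_of_cand {A B X : Matrix (Fin d) (Fin d) ℚ_[p]} (hA : A.det ≠ 0)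
    {S : Finset (Fin d)} {ρ : Fin d → Fin d}
    (hX : ∀ j, X j = if j ∈ S then A (ρ j) else B (ρ j)) (j : Fin d) :
    (X * A⁻¹) j = if j ∈ S then (fun c => if ρ j = c then (1:ℚ_[p]) else 0)
      else (B * A⁻¹) (ρ j) := by
  have hAu : IsUnit A.det := isUnit_iff_ne_zero.2 hA
  by_cases hj : j ∈ S
  · rw [if_pos hj]
    funext c
    have hXj : X j = A (ρ j) := by rw [hX j, if_pos hj]
    have : (X * A⁻¹) j c = (A * A⁻¹) (ρ j) c := by
      rw [Matrix.mul_apply, Matrix.mul_apply]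
      exact Finset.sum_congr rfl fun t _ => by rw [congrFun hXj t]
    rw [this, Matrix.mul_nonsing_inv A hAu, Matrix.one_apply]
  · rw [if_neg hj]
    funext c
    have hXj : X j = B (ρ j) := by rw [hX j, if_neg hj]
    rw [Matrix.mul_apply, Matrix.mul_apply]
    exact Finset.sum_congr rfl fun t _ => by rw [congrFun hXj t]

lemma det_factor {A X : Matrix (Fin d) (Fin d) ℚ_[p]} (hA : A.det ≠ 0) :
    X.det = (X * A⁻¹).det * A.det := by
  rw [Matrix.det_mul, Matrix.det_nonsing_inv, Ring.inverse_eq_inv',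
    mul_assoc, inv_mul_cancel₀ hA, mul_one]

/-- minor value gives a candidate value -/
lemma mem_candVals_of_minor {A B : Matrix (Fin d) (Fin d) ℚ_[p]} (hA : A.det ≠ 0)
    {i : ℕ} (hi : i ≤ d) {w : ℤ} (hw : w ∈ minorVals p d (d - i) (B * A⁻¹)) :
    A.det.valuation + w ∈ candVals p d i A B := by
  classical
  obtain ⟨f, g, hf, hg, hdm, rfl⟩ := hw
  set M := B * A⁻¹ with hM
  set S : Finset (Fin d) := (Finset.univ.image g)ᶜ with hS
  have hgim : ∀ a, g a ∈ Sᶜ := by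
    intro a; rw [hS, compl_compl]; exact Finset.mem_image_of_mem g (Finset.mem_univ a)
  have hgnS : ∀ a, g a ∉ S := by
    intro a; have := hgim a; rw [Finset.mem_compl] at this; simpa using this
  have hScard : S.card = i := by
    rw [hS, Finset.card_compl, Finset.card_image_of_injective _ hg]
    simp [Finset.card_fin]
    omega
  set ρ : Fin d → Fin d := Function.extend g f id with hρ
  have hρS : ∀ j ∈ S, ρ j = j := by
    intro j hj
    rw [hρ, Function.extend_apply' _ _ _ ?_]
    · rfl
    · rintro ⟨a, rfl⟩
      exact hgnS a hj
  have hρg : ∀ a, ρ (g a) = f a := by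
    intro a
    rw [hρ, hg.extend_apply]
  have hinjS : Set.InjOn ρ ↑S := fun a ha b hb hab => by
    rwa [hρS a (by simpa using ha), hρS b (by simpa using hb)] at hab
  have hinjSc : Set.InjOn ρ ↑Sᶜ := by
    intro a ha b hb hab
    rw [Finset.coe_compl] at ha hb
    have ha' : a ∈ Finset.univ.image g := by
      have : a ∈ Sᶜ := by simpa using ha
      rwa [hS, compl_compl] at this
    have hb' : b ∈ Finset.univ.image g := by
      have : b ∈ Sᶜ := by simpa using hb
      rwa [hS, compl_compl] at this
    obtain ⟨a', _, rfl⟩ := Finset.mem_image.1 ha'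
    obtain ⟨b', _, rfl⟩ := Finset.mem_image.1 hb'
    rw [hρg, hρg] at hab
    rw [hf hab]
  set X : Matrix (Fin d) (Fin d) ℚ_[p] :=
    Matrix.of fun j => if j ∈ S then A (ρ j) else B (ρ j) with hXdef
  have hXrows : ∀ j, X j = if j ∈ S then A (ρ j) else B (ρ j) := fun j => rfl
  have hcand : IsCandidate p d i A B X := ⟨S, ρ, hScard, hinjS, hinjSc, hXrows⟩
  set N := X * A⁻¹ with hN
  have hNrows : ∀ j, N j = if j ∈ S then (fun c => if ρ j = c then (1:ℚ_[p]) else 0)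
      else (B * A⁻¹) (ρ j) := by
    rw [hN]; exact rows_of_cand hA hXrows
  have hrowS : ∀ j ∈ S, N j = fun c => if ρ j = c then (1:ℚ_[p]) else 0 := by
    intro j hj; rw [hNrows j, if_pos hj]
  have himρ : S.image ρ = S := by
    rw [Finset.image_congr (g := id) (fun j hj => hρS j hj), Finset.image_id]
  have hnormN : ‖N.det‖ = ‖(N.submatrix g g).det‖ := by
    refine BTAux.norm_det_eq_submatrix N S ρ hinjS hrowS g g hg hg hgnS ?_ ?_
    · intro a; rw [himρ]; exact hgnS a
    · rw [hScard]; omega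
  have hsub : N.submatrix g g = M.submatrix f g := by
    ext a b
    show N (g a) (g b) = M (f a) (g b)
    rw [hNrows (g a)]
    rw [if_neg (hgnS a)]
    rw [hρg a]
  rw [hsub] at hnormN
  have hNdet : N.det ≠ 0 := by
    intro hzero
    rw [hzero, norm_zero] at hnormN
    exact hdm (norm_eq_zero.1 hnormN.symm)
  have hXdet : X.det ≠ 0 := by
    rw [det_factor hA (X := X), ← hN]
    exact mul_ne_zero hNdet hA
  refine ⟨X, hcand, hXdet, ?_⟩
  rw [det_factor hA (X := X), ← hN,
    Padic.valuation_mul hNdet hA,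
    val_eq_of_norm_eq hNdet hdm hnormN, add_comm]

/-- candidate value comes from a minor value -/
lemma minor_of_mem_candVals {A B : Matrix (Fin d) (Fin d) ℚ_[p]} (hA : A.det ≠ 0)
    {i : ℕ} (hi : i ≤ d) {v : ℤ} (hv : v ∈ candVals p d i A B) :
    ∃ w ∈ minorVals p d (d - i) (B * A⁻¹), v = A.det.valuation + w := by
  classical
  obtain ⟨X, ⟨S, ρ, hScard, hinjS, hinjSc, hXrows⟩, hXdet, rfl⟩ := hv
  set M := B * A⁻¹ with hM
  set N := X * A⁻¹ with hN
  have hNrows : ∀ j, N j = if j ∈ S then (fun c => if ρ j = c then (1:ℚ_[p]) else 0)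
      else (B * A⁻¹) (ρ j) := by
    rw [hN]; exact rows_of_cand hA hXrows
  have hrowS : ∀ j ∈ S, N j = fun c => if ρ j = c then (1:ℚ_[p]) else 0 := by
    intro j hj; rw [hNrows j, if_pos hj]
  have hi' : i ≤ d := hi
  have hSc : Sᶜ.card = d - i := by rw [Finset.card_compl, hScard]; simp [Finset.card_fin]
  have hT : (S.image ρ).card = i := by rw [Finset.card_image_of_injOn hinjS, hScard]
  have hTc : (S.image ρ)ᶜ.card = d - i := by
    rw [Finset.card_compl, hT]; simp [Finset.card_fin]
  set f : Fin (d - i) → Fin d := fun a => (Sᶜ.orderIsoOfFin hSc a : Fin d) with hfdef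
  set g : Fin (d - i) → Fin d := fun a => ((S.image ρ)ᶜ.orderIsoOfFin hTc a : Fin d) with hgdef
  have hf : Function.Injective f := fun a b hab =>
    (Sᶜ.orderIsoOfFin hSc).injective (Subtype.ext hab)
  have hg : Function.Injective g := fun a b hab =>
    ((S.image ρ)ᶜ.orderIsoOfFin hTc).injective (Subtype.ext hab)
  have hfS : ∀ a, f a ∉ S := by
    intro a
    have := (Sᶜ.orderIsoOfFin hSc a).2
    rwa [Finset.mem_compl] at this
  have hgT : ∀ a, g a ∉ S.image ρ := by
    intro a
    have := ((S.image ρ)ᶜ.orderIsoOfFin hTc a).2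
    rwa [Finset.mem_compl] at this
  have hnormN : ‖N.det‖ = ‖(N.submatrix f g).det‖ := by
    refine BTAux.norm_det_eq_submatrix N S ρ hinjS hrowS f g hf hg hfS hgT ?_
    rw [hScard]; omega
  have hsub : N.submatrix f g = M.submatrix (ρ ∘ f) g := by
    ext a b
    show N (f a) (g b) = M (ρ (f a)) (g b)
    rw [hNrows (f a)]
    rw [if_neg (hfS a)]
  have hρf : Function.Injective (ρ ∘ f) := by
    intro a b hab
    have hmem : ∀ c, (f c) ∈ (↑(Sᶜ) : Set (Fin d)) := by
      intro c; rw [Finset.coe_compl]; simpa using hfS c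
    exact hf (hinjSc (hmem a) (hmem b) hab)
  have hNdet : N.det ≠ 0 := by
    rw [hN]
    rw [Matrix.det_mul]
    exact mul_ne_zero hXdet (by
      rw [Matrix.det_nonsing_inv, Ring.inverse_eq_inv']
      exact inv_ne_zero hA)
  have hmdet : (M.submatrix (ρ ∘ f) g).det ≠ 0 := by
    rw [hsub] at hnormN
    intro hzero
    rw [hzero, norm_zero, norm_eq_zero] at hnormN
    exact hNdet hnormN
  refine ⟨(M.submatrix (ρ ∘ f) g).det.valuation, ⟨ρ ∘ f, g, hρf, hg, hmdet, rfl⟩, ?_⟩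
  rw [det_factor hA (X := X), ← hN, Padic.valuation_mul hNdet hA]
  rw [hsub] at hnormN
  rw [val_eq_of_norm_eq hNdet hmdet hnormN, add_comm]

lemma mVal_zero {A B : Matrix (Fin d) (Fin d) ℚ_[p]} (hB : B.det ≠ 0) :
    mVal p d 0 A B = B.det.valuation := by
  classical
  have hset : candVals p d 0 A B = {B.det.valuation} := by
    apply Set.eq_singleton_iff_unique_mem.2
    constructor
    · refine ⟨B, ⟨∅, id, rfl, ?_, ?_, fun j => by rw [if_neg (Finset.notMem_empty j)]; rfl⟩, hB, rfl⟩
      · simp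
      · intro a _ b _ h; exact h
    · rintro v ⟨X, ⟨S, ρ, hS0, _, hρc, hX⟩, hXdet, rfl⟩
      have hSempty : S = ∅ := Finset.card_eq_zero.1 hS0
      subst hSempty
      have hρinj : Function.Injective ρ := fun a b h => hρc (by simp) (by simp) h
      have hbij : Function.Bijective ρ := Finite.injective_iff_bijective.1 hρinj
      have hXeq : X = B.submatrix ⇑(Equiv.ofBijective ρ hbij) id := by
        ext j c
        rw [show X j = _ from hX j, if_neg (Finset.notMem_empty j)]
        rfl
      have hnorm : ‖X.det‖ = ‖B.det‖ := by
        rw [hXeq, Matrix.det_permute, BTAux.norm_sign_mul]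
      exact val_eq_of_norm_eq hXdet hB hnorm
  rw [mVal_eq, hset, csInf_singleton]

end Glue

/-- **Triangle-like inequality for `m`.** For all `A, B, C ∈ GL_d(ℚ_p)` and
`0 ≤ i ≤ d`: `m_{A:0,B:d} + m_{A:i,C:d−i} − m_{A:i,B:d−i} − m_{B:i,C:d−i} ≥ 0`. -/
theorem mVal_triangle (hd : 2 ≤ d) (A B C : Matrix (Fin d) (Fin d) ℚ_[p])
    (hA : A.det ≠ 0) (hB : B.det ≠ 0) (hC : C.det ≠ 0) (i : ℕ) (hi : i ≤ d) :
    0 ≤ mVal p d 0 A B + mVal p d i A C - mVal p d i A B - mVal p d i B C := by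
  classical
  have hkd : d - i ≤ d := Nat.sub_le d i
  have hAinv : (A⁻¹).det ≠ 0 := by
    rw [Matrix.det_nonsing_inv, Ring.inverse_eq_inv']; exact inv_ne_zero hA
  have hBinv : (B⁻¹).det ≠ 0 := by
    rw [Matrix.det_nonsing_inv, Ring.inverse_eq_inv']; exact inv_ne_zero hB
  have hM1 : (B * A⁻¹).det ≠ 0 := by rw [Matrix.det_mul]; exact mul_ne_zero hB hAinv
  have hM2 : (C * B⁻¹).det ≠ 0 := by rw [Matrix.det_mul]; exact mul_ne_zero hC hBinv
  have hM3 : (C * A⁻¹).det ≠ 0 := by rw [Matrix.det_mul]; exact mul_ne_zero hC hAinv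
  have hne1 : (minorVals p d (d - i) (B * A⁻¹)).Nonempty := by
    obtain ⟨f, g, hf, hg, h0⟩ := BTAux.exists_nonzero_minor hkd _ hM1
    exact ⟨_, f, g, hf, hg, h0, rfl⟩
  have hne2 : (minorVals p d (d - i) (C * B⁻¹)).Nonempty := by
    obtain ⟨f, g, hf, hg, h0⟩ := BTAux.exists_nonzero_minor hkd _ hM2
    exact ⟨_, f, g, hf, hg, h0, rfl⟩
  have hne3 : (minorVals p d (d - i) (C * A⁻¹)).Nonempty := by
    obtain ⟨f, g, hf, hg, h0⟩ := BTAux.exists_nonzero_minor hkd _ hM3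
    exact ⟨_, f, g, hf, hg, h0, rfl⟩
  have hxmem := Int.csInf_mem hne1 (minorVals_bddBelow p d (d - i) (B * A⁻¹))
  have hymem := Int.csInf_mem hne2 (minorVals_bddBelow p d (d - i) (C * B⁻¹))
  set x := sInf (minorVals p d (d - i) (B * A⁻¹)) with hxdef
  set y := sInf (minorVals p d (d - i) (C * B⁻¹)) with hydef
  have hmAB : mVal p d i A B ≤ A.det.valuation + x :=
    csInf_le (candVals_bddBelow p d i A B) (mem_candVals_of_minor hA hi hxmem)
  have hmBC : mVal p d i B C ≤ B.det.valuation + y :=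
    csInf_le (candVals_bddBelow p d i B C) (mem_candVals_of_minor hB hi hymem)
  have hne3' : (candVals p d i A C).Nonempty := by
    obtain ⟨w, hw⟩ := hne3
    exact ⟨_, mem_candVals_of_minor hA hi hw⟩
  have hmemAC : mVal p d i A C ∈ candVals p d i A C :=
    Int.csInf_mem hne3' (candVals_bddBelow p d i A C)
  obtain ⟨w, hwmem, hACeq⟩ := minor_of_mem_candVals hA hi hmemAC
  obtain ⟨f, g, hf, hg, hwdet, hweq⟩ := hwmem
  have hppos : (0:ℝ) < p := p_pos p
  have hfact : C * A⁻¹ = (C * B⁻¹) * (B * A⁻¹) := by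
    rw [Matrix.mul_assoc, ← Matrix.mul_assoc B⁻¹ B A⁻¹,
      Matrix.nonsing_inv_mul B (isUnit_iff_ne_zero.2 hB), Matrix.one_mul]
  have hbound : ‖(((C * B⁻¹) * (B * A⁻¹)).submatrix f g).det‖ ≤ (p:ℝ)^(-y) * (p:ℝ)^(-x) := by
    refine BTAux.norm_det_mul_submatrix_le _ _ f g (le_of_lt (zpow_pos hppos _))
      (le_of_lt (zpow_pos hppos _)) ?_ ?_
    · intro e he
      by_cases h0 : (((C * B⁻¹)).submatrix f e).det = 0
      · rw [h0, norm_zero]; positivity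
      · have hm : (((C * B⁻¹)).submatrix f e).det.valuation
            ∈ minorVals p d (d - i) (C * B⁻¹) := ⟨f, e, hf, he, h0, rfl⟩
        exact norm_le_pow_of_le_val h0
          (csInf_le (minorVals_bddBelow p d (d - i) (C * B⁻¹)) hm)
    · intro e he
      by_cases h0 : (((B * A⁻¹)).submatrix e g).det = 0
      · rw [h0, norm_zero]; positivity
      · have hm : (((B * A⁻¹)).submatrix e g).det.valuation
            ∈ minorVals p d (d - i) (B * A⁻¹) := ⟨e, g, he, hg, h0, rfl⟩
        exact norm_le_pow_of_le_val h0
          (csInf_le (minorVals_bddBelow p d (d - i) (B * A⁻¹)) hm)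
  rw [← hfact] at hbound
  have hpow : (p:ℝ)^(-y) * (p:ℝ)^(-x) = (p:ℝ)^(-(x+y)) := by
    rw [← zpow_add₀ (ne_of_gt hppos)]
    ring_nf
  have hxyw : x + y ≤ w := by
    rw [hweq]
    exact val_le_of_norm_le hwdet (le_trans hbound (le_of_eq hpow))
  rw [mVal_zero hB, hACeq]
  linarith [hmAB, hmBC, hxyw]


end BT
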